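/- For a Schwartz function f, t ∈ ℝ, and Λ > 0, the sum Σ_{n∈ℤ} (n+2)(n+1) f((n+3t)²/Λ²) equals Λ³ ∫_ℝ y² f(y²) dy + Λ (3t-1)(3t-2) ∫_ℝ f(y²) dy + R(Λ), where for every k ∈ ℕ, R(Λ) = O(Λ^{-k}) as Λ → ∞. -/

import Mathlib

open MeasureTheory Filter Asymptotics

section SpectralActionAux

open SchwartzMap Complex Real
open scoped FourierTransform

noncomputable section

private lemma htg_sq' : Function.HasTemperateGrowth (fun v : ℝ => v ^ 2) := by
  have h1 : Function.HasTemperateGrowth (fderiv ℝ (fun v : ℝ => v ^ 2)) := by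
    have e : (fderiv ℝ (fun v : ℝ => v ^ 2)) =
        ⇑((ContinuousLinearMap.smulRightL ℝ ℝ ℝ (1 : ℝ →L[ℝ] ℝ)).comp
          (2 • (ContinuousLinearMap.id ℝ ℝ))) := by
      funext x
      have := (hasDerivAt_pow 2 x).hasFDerivAt.fderiv
      rw [this]
      simp [ContinuousLinearMap.smulRightL, ContinuousLinearMap.smulRight_one_eq_toSpanSingleton]
    rw [e]
    exact ContinuousLinearMap.hasTemperateGrowth _
  refine Function.HasTemperateGrowth.of_fderiv h1 (differentiable_pow 2) (k := 2) (C := 1) ?_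
  intro x
  have h : ‖x ^ 2‖ = ‖x‖ ^ 2 := by rw [norm_pow]
  rw [h]
  nlinarith [norm_nonneg x]

private lemma htg_aff' (a b : ℝ) : Function.HasTemperateGrowth (fun x : ℝ => a * x + b) := by
  have e : (fun x : ℝ => a * x + b) = fun x => (a • (ContinuousLinearMap.id ℝ ℝ)) x + b := by
    funext x; simp [smul_eq_mul]
  rw [e]
  refine Function.HasTemperateGrowth.of_fderiv ?_ ?_ (k := 1) (C := |a| + |b|) ?_
  · have h : (fderiv ℝ fun x : ℝ => (a • (ContinuousLinearMap.id ℝ ℝ)) x + b) =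
        fun _ => a • (ContinuousLinearMap.id ℝ ℝ) := by
      funext x
      exact (((a • (ContinuousLinearMap.id ℝ ℝ)).hasFDerivAt.add_const b).fderiv)
    rw [h]
    exact Function.HasTemperateGrowth.const _
  · exact ((a • (ContinuousLinearMap.id ℝ ℝ)).differentiable).add_const b
  · intro x
    simp only [ContinuousLinearMap.smul_apply, ContinuousLinearMap.id_apply, smul_eq_mul]
    have h1 : ‖a * x + b‖ ≤ |a| * ‖x‖ + |b| := by
      rw [Real.norm_eq_abs] at *
      calc |a * x + b| ≤ |a * x| + |b| := abs_add_le _ _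
      _ = |a| * |x| + |b| := by rw [abs_mul]
      _ = |a| * ‖x‖ + |b| := rfl
    refine h1.trans ?_
    have hx : 0 ≤ ‖x‖ := norm_nonneg x
    rw [pow_one]
    nlinarith [abs_nonneg a, abs_nonneg b]

private lemma fourier_shift_scale' (ψ : ℝ → ℂ) {Λ : ℝ} (hΛ : 0 < Λ) (a ξ : ℝ) :
    𝓕 (fun x : ℝ => ψ ((x + a) / Λ)) ξ
      = (Λ : ℂ) * Complex.exp ((2 * π * a * ξ : ℝ) * I) * 𝓕 ψ (Λ * ξ) := by
  rw [Real.fourier_real_eq_integral_exp_smul,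
    Real.fourier_real_eq_integral_exp_smul]
  set F : ℝ → ℂ := fun x => Complex.exp ((-2 * π * x * ξ : ℝ) * I) • ψ ((x + a) / Λ) with hF
  set G : ℝ → ℂ := fun y => Complex.exp ((-2 * π * (Λ * y - a) * ξ : ℝ) * I) • ψ y with hG
  have h1 : (∫ x : ℝ, F (Λ * x)) = |Λ⁻¹| • ∫ x, F x :=
    MeasureTheory.Measure.integral_comp_mul_left F Λ
  have h2 : (∫ x : ℝ, F x) = Λ • ∫ x : ℝ, F (Λ * x) := by
    rw [h1, smul_smul, abs_of_pos (inv_pos.2 hΛ), mul_inv_cancel₀ hΛ.ne', one_smul]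
  have h3 : ∀ x : ℝ, F (Λ * x) = G (x + a / Λ) := by
    intro x
    have e1 : Λ * (x + a / Λ) - a = Λ * x := by field_simp; ring
    have e2 : (Λ * x + a) / Λ = x + a / Λ := by
      rw [add_div, mul_div_cancel_left₀ _ hΛ.ne']
    simp only [hF, hG, e1, e2]
  have h4 : (∫ x : ℝ, F (Λ * x)) = ∫ y, G y := by
    simp_rw [h3]
    exact integral_add_right_eq_self G (a / Λ)
  have h5 : (∫ y, G y) = Complex.exp ((2 * π * a * ξ : ℝ) * I) •
      ∫ y : ℝ, Complex.exp ((-2 * π * y * (Λ * ξ) : ℝ) * I) • ψ y := by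
    rw [← integral_smul]
    congr 1
    funext y
    simp only [hG, smul_smul, ← Complex.exp_add]
    congr 2
    push_cast
    ring
  rw [h2, h4, h5]
  rw [← smul_assoc, smul_eq_mul, Complex.real_smul, mul_assoc]

private lemma schwartz_summable_int' (ψ : SchwartzMap ℝ ℂ) : Summable fun n : ℤ => ψ n :=
  summable_of_isBigO (Real.summable_abs_int_rpow one_lt_two)
    ((ψ.isBigO_cocompact_rpow (-2)).comp_tendsto Int.tendsto_coe_cofinite)

private lemma fourier_at_zero' (h : ℝ → ℂ) : 𝓕 h 0 = ∫ v, h v := by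
  rw [Real.fourier_real_eq_integral_exp_smul]
  simp

private lemma exists_comp' (ψ : SchwartzMap ℝ ℂ) (a : ℝ) {Λ : ℝ} (hΛ : 0 < Λ) :
    ∃ T : SchwartzMap ℝ ℂ, ∀ x : ℝ, T x = ψ ((x + a) / Λ) := by
  have hg : Function.HasTemperateGrowth (fun x : ℝ => (x + a) / Λ) := by
    have e : (fun x : ℝ => (x + a) / Λ) = fun x => Λ⁻¹ * x + a / Λ := by
      funext x; field_simp
    rw [e]; exact htg_aff' _ _
  have hup : ∃ (k : ℕ) (C : ℝ), ∀ x : ℝ, ‖x‖ ≤ C * (1 + ‖(x + a) / Λ‖) ^ k := by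
    refine ⟨1, Λ + |a|, fun x => ?_⟩
    have h1 : x = Λ * ((x + a) / Λ) - a := by field_simp; ring
    have h2 : ‖x‖ ≤ Λ * ‖(x + a) / Λ‖ + |a| := by
      rw [Real.norm_eq_abs, Real.norm_eq_abs]
      calc |x| = |Λ * ((x + a) / Λ) - a| := by rw [← h1]
      _ ≤ |Λ * ((x + a) / Λ)| + |a| := abs_sub _ _
      _ = Λ * |(x + a) / Λ| + |a| := by rw [abs_mul, abs_of_pos hΛ]
    have h3 : (0:ℝ) ≤ ‖(x + a) / Λ‖ := norm_nonneg _
    have h4 : (0:ℝ) ≤ |a| := abs_nonneg a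
    rw [pow_one]
    nlinarith [hΛ.le]
  exact ⟨compCLM ℝ hg hup ψ, fun x => by simp⟩

private lemma key' (ψ : SchwartzMap ℝ ℂ) (a : ℝ) :
    ∃ S : ℝ → ℂ,
      (∀ Λ : ℝ, 0 < Λ →
        (Summable fun n : ℤ => ψ (((n : ℝ) + a) / Λ)) ∧
        ∑' n : ℤ, ψ (((n : ℝ) + a) / Λ) = Λ * (∫ v : ℝ, ψ v) + Λ * S Λ)
      ∧ ∀ k : ℕ, S =O[atTop] fun Λ : ℝ => Λ ^ (-(k : ℤ)) := by
  classical
  set Φ : SchwartzMap ℝ ℂ := fourierTransformCLM ℝ ψ with hΦdef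
  have hΦ : ⇑Φ = 𝓕 ⇑ψ := fourier_coe ψ
  refine ⟨fun Λ => ∑' n : ℤ, if n = 0 then 0 else
      Complex.exp ((2 * π * a * (n : ℝ) : ℝ) * I) * 𝓕 ⇑ψ (Λ * (n : ℝ)), ?_, ?_⟩
  · intro Λ hΛ
    obtain ⟨T, hT⟩ := exists_comp' ψ a hΛ
    have hsumL : Summable fun n : ℤ => ψ (((n : ℝ) + a) / Λ) :=
      (schwartz_summable_int' T).congr fun n => hT n
    refine ⟨hsumL, ?_⟩
    have hterm : ∀ n : ℤ, (fourierTransformCLM ℝ T) n * fourier n (0 : UnitAddCircle)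
        = (Λ : ℂ) * Complex.exp ((2 * π * a * (n : ℝ) : ℝ) * I) * 𝓕 ⇑ψ (Λ * (n : ℝ)) := by
      intro n
      rw [fourier_eval_zero, mul_one]
      have h : ⇑(fourierTransformCLM ℝ T) = 𝓕 ⇑T := fourier_coe T
      rw [show ((fourierTransformCLM ℝ T) (n : ℝ)) = 𝓕 ⇑T (n : ℝ) from congrFun h _]
      rw [show ⇑T = fun x : ℝ => ψ ((x + a) / Λ) from funext hT]
      exact fourier_shift_scale' ⇑ψ hΛ a (n : ℝ)
    have hsumF : Summable fun n : ℤ =>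
        (Λ : ℂ) * Complex.exp ((2 * π * a * (n : ℝ) : ℝ) * I) * 𝓕 ⇑ψ (Λ * (n : ℝ)) :=
      (schwartz_summable_int' (fourierTransformCLM ℝ T)).congr fun n => by
        rw [← hterm n, fourier_eval_zero, mul_one]
    calc ∑' n : ℤ, ψ (((n : ℝ) + a) / Λ)
        = ∑' n : ℤ, T ((0 : ℝ) + (n : ℤ)) := by
          refine tsum_congr fun n => ?_
          rw [zero_add, hT]
      _ = ∑' n : ℤ, (fourierTransformCLM ℝ T) n * fourier n ((0 : ℝ) : UnitAddCircle) :=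
          SchwartzMap.tsum_eq_tsum_fourier T 0
      _ = ∑' n : ℤ, (Λ : ℂ) * Complex.exp ((2 * π * a * (n : ℝ) : ℝ) * I) * 𝓕 ⇑ψ (Λ * (n : ℝ)) := by
          refine tsum_congr fun n => ?_
          exact_mod_cast hterm n
      _ = (Λ : ℂ) * Complex.exp ((2 * π * a * ((0:ℤ) : ℝ) : ℝ) * I) * 𝓕 ⇑ψ (Λ * ((0:ℤ) : ℝ))
            + ∑' n : ℤ, if n = 0 then 0 else
              (Λ : ℂ) * Complex.exp ((2 * π * a * (n : ℝ) : ℝ) * I) * 𝓕 ⇑ψ (Λ * (n : ℝ)) :=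
          Summable.tsum_eq_add_tsum_ite hsumF 0
      _ = Λ * (∫ v : ℝ, ψ v) + Λ * ∑' n : ℤ, (if n = 0 then 0 else
              Complex.exp ((2 * π * a * (n : ℝ) : ℝ) * I) * 𝓕 ⇑ψ (Λ * (n : ℝ))) := by
          congr 1
          · rw [show (((0:ℤ):ℝ)) = (0:ℝ) by norm_num]
            rw [mul_zero, mul_zero, fourier_at_zero']
            norm_num
          · rw [← tsum_mul_left]
            refine tsum_congr fun n => ?_
            split_ifs with h
            · rw [mul_zero]
            · ring
  · intro k
    obtain ⟨C, hCpos, hC⟩ := Φ.decay (k + 2) 0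
    have hKs : Summable fun n : ℤ => |(n : ℝ)| ^ (-(2:ℝ)) :=
      Real.summable_abs_int_rpow one_lt_two
    rw [isBigO_iff]
    refine ⟨C * ∑' n : ℤ, |(n : ℝ)| ^ (-(2:ℝ)), ?_⟩
    filter_upwards [eventually_ge_atTop (1 : ℝ)] with Λ hΛ1
    have hΛ0 : (0:ℝ) < Λ := lt_of_lt_of_le one_pos hΛ1
    have hbound : ∀ n : ℤ, ‖(if n = 0 then (0:ℂ) else
        Complex.exp ((2 * π * a * (n : ℝ) : ℝ) * I) * 𝓕 ⇑ψ (Λ * (n : ℝ)))‖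
        ≤ (C * Λ ^ (-(k:ℤ))) * |(n : ℝ)| ^ (-(2:ℝ)) := by
      intro n
      by_cases h : n = 0
      · simp [h, Real.zero_rpow]
      · rw [if_neg h, norm_mul, Complex.norm_exp_ofReal_mul_I, one_mul, ← hΦ]
        have hn1 : (1:ℝ) ≤ |(n : ℝ)| := by
          rw [← Int.cast_abs]
          exact_mod_cast Int.one_le_abs h
        have hn0 : (0:ℝ) < |(n : ℝ)| := lt_of_lt_of_le one_pos hn1
        have hx : ‖(Λ * (n:ℝ))‖ = Λ * |(n:ℝ)| := by
          rw [Real.norm_eq_abs, abs_mul, abs_of_pos hΛ0]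
        have hpos : (0:ℝ) < (Λ * |(n:ℝ)|) ^ (k + 2) := by positivity
        have h1 : ‖Φ (Λ * (n:ℝ))‖ ≤ C / (Λ * |(n:ℝ)|) ^ (k + 2) := by
          rw [le_div_iff₀ hpos]
          have h' := hC (Λ * (n:ℝ))
          rw [norm_iteratedFDeriv_zero, hx] at h'
          linarith [h']
        have h2 : Λ ^ k * |(n:ℝ)| ^ 2 ≤ (Λ * |(n:ℝ)|) ^ (k + 2) := by
          rw [mul_pow]
          have e1 : Λ ^ k ≤ Λ ^ (k + 2) := pow_le_pow_right₀ hΛ1 (by omega)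
          have e2 : |(n:ℝ)| ^ 2 ≤ |(n:ℝ)| ^ (k + 2) := pow_le_pow_right₀ hn1 (by omega)
          have h3 : (0:ℝ) ≤ Λ ^ k := by positivity
          nlinarith [pow_nonneg (abs_nonneg (n:ℝ)) 2, pow_nonneg hΛ0.le (k+2),
            pow_nonneg (abs_nonneg (n:ℝ)) (k+2)]
        have h3 : C / (Λ * |(n:ℝ)|) ^ (k + 2) ≤ C / (Λ ^ k * |(n:ℝ)| ^ 2) :=
          div_le_div_of_nonneg_left hCpos.le (by positivity) h2
        have h4 : C / (Λ ^ k * |(n:ℝ)| ^ 2) = (C * Λ ^ (-(k:ℤ))) * |(n : ℝ)| ^ (-(2:ℝ)) := by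
          rw [show ((-(2:ℝ))) = ((-2 : ℤ) : ℝ) by norm_num, Real.rpow_intCast]
          rw [zpow_neg, zpow_neg, zpow_natCast, zpow_two]
          rw [div_eq_mul_inv, mul_inv]
          ring_nf
        linarith [h1.trans h3, le_of_eq h4]
    calc ‖∑' n : ℤ, (if n = 0 then (0:ℂ) else
            Complex.exp ((2 * π * a * (n : ℝ) : ℝ) * I) * 𝓕 ⇑ψ (Λ * (n : ℝ)))‖
        ≤ ∑' n : ℤ, (C * Λ ^ (-(k:ℤ))) * |(n : ℝ)| ^ (-(2:ℝ)) :=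
          tsum_of_norm_bounded (Summable.hasSum (hKs.mul_left _)) hbound
      _ = (C * Λ ^ (-(k:ℤ))) * ∑' n : ℤ, |(n : ℝ)| ^ (-(2:ℝ)) := tsum_mul_left
      _ = (C * ∑' n : ℤ, |(n : ℝ)| ^ (-(2:ℝ))) * ‖Λ ^ (-(k:ℤ))‖ := by
          rw [Real.norm_eq_abs, abs_of_pos (zpow_pos hΛ0 _)]
          ring

variable (f : SchwartzMap ℝ ℝ)

private def hupsq : ∃ (k : ℕ) (C : ℝ), ∀ x : ℝ, ‖x‖ ≤ C * (1 + ‖x ^ 2‖) ^ k := by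
  refine ⟨1, 1, fun x => ?_⟩
  have h : ‖x ^ 2‖ = x ^ 2 := by rw [Real.norm_eq_abs, _root_.abs_of_nonneg (sq_nonneg x)]
  rw [h, pow_one, one_mul, Real.norm_eq_abs]
  nlinarith [sq_nonneg (|x| - 1), abs_nonneg x, _root_.sq_abs x]

private def phir : SchwartzMap ℝ ℝ := compCLM ℝ htg_sq' hupsq f

private lemma phir_apply (x : ℝ) : phir f x = f (x ^ 2) := by simp [phir]

private def psi0 : SchwartzMap ℝ ℂ :=
  bilinLeftCLM (ContinuousLinearMap.lsmul ℝ ℝ : ℝ →L[ℝ] ℂ →L[ℝ] ℂ)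
    (Function.HasTemperateGrowth.const (1 : ℂ)) (phir f)

private lemma psi0_apply (x : ℝ) : psi0 f x = ((f (x ^ 2) : ℝ) : ℂ) := by
  show (phir f x) • (1 : ℂ) = _
  rw [phir_apply]
  simp [Complex.real_smul]

private def mulx : SchwartzMap ℝ ℂ →L[ℝ] SchwartzMap ℝ ℂ :=
  bilinLeftCLM (ContinuousLinearMap.mul ℝ ℂ) Complex.ofRealCLM.hasTemperateGrowth

private def psi1 : SchwartzMap ℝ ℂ := mulx (psi0 f)

private lemma psi1_apply (x : ℝ) : psi1 f x = ((f (x ^ 2) : ℝ) : ℂ) * (x : ℂ) := by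
  show (psi0 f x) * (Complex.ofRealCLM x) = _
  rw [psi0_apply]
  rfl

private def psi2 : SchwartzMap ℝ ℂ := mulx (psi1 f)

private lemma psi2_apply (x : ℝ) : psi2 f x = ((f (x ^ 2) : ℝ) : ℂ) * (x : ℂ) * (x : ℂ) := by
  show (psi1 f x) * (Complex.ofRealCLM x) = _
  rw [psi1_apply]
  rfl

end
end SpectralActionAux

/-- For Schwartz f and t ∈ ℝ, the spectral action
Σ_{n∈ℤ} (n+2)(n+1) f((n+3t)²/Λ²) equals
Λ³ ∫ y² f(y²) dy + Λ (3t-1)(3t-2) ∫ f(y²) dy + R(Λ), where R(Λ) = O(Λ^{-k}) for every k. -/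
theorem stmt11 (f : SchwartzMap ℝ ℝ) (t : ℝ) :
    ∃ R : ℝ → ℝ,
      (∀ Λ : ℝ, 0 < Λ →
        ∑' n : ℤ, ((n : ℝ) + 2) * ((n : ℝ) + 1) * f (((n : ℝ) + 3 * t) ^ 2 / Λ ^ 2)
          = Λ ^ 3 * (∫ y : ℝ, y ^ 2 * f (y ^ 2))
            + Λ * ((3 * t - 1) * (3 * t - 2)) * (∫ y : ℝ, f (y ^ 2)) + R Λ)
      ∧ ∀ k : ℕ, R =O[atTop] fun Λ : ℝ => Λ ^ (-(k : ℤ)) := by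
  obtain ⟨S2, hS2, hS2O⟩ := key' (psi2 f) (3 * t)
  obtain ⟨S1, hS1, hS1O⟩ := key' (psi1 f) (3 * t)
  obtain ⟨S0, hS0, hS0O⟩ := key' (psi0 f) (3 * t)
  -- integrals
  have hI2 : (∫ v : ℝ, psi2 f v) = (((∫ y : ℝ, y ^ 2 * f (y ^ 2)) : ℝ) : ℂ) := by
    calc (∫ v : ℝ, psi2 f v)
        = ∫ v : ℝ, ((v ^ 2 * f (v ^ 2) : ℝ) : ℂ) := by
          refine integral_congr_ae (Filter.Eventually.of_forall fun v => ?_)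
          rw [psi2_apply]
          push_cast
          ring
      _ = (((∫ y : ℝ, y ^ 2 * f (y ^ 2)) : ℝ) : ℂ) := integral_ofReal
  have hI0 : (∫ v : ℝ, psi0 f v) = (((∫ y : ℝ, f (y ^ 2)) : ℝ) : ℂ) := by
    calc (∫ v : ℝ, psi0 f v)
        = ∫ v : ℝ, ((f (v ^ 2) : ℝ) : ℂ) := by
          refine integral_congr_ae (Filter.Eventually.of_forall fun v => ?_)
          rw [psi0_apply]
      _ = (((∫ y : ℝ, f (y ^ 2)) : ℝ) : ℂ) := integral_ofReal
  have hI1 : (∫ v : ℝ, psi1 f v) = 0 := by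
    have hr : (∫ v : ℝ, v * f (v ^ 2)) = 0 := by
      have h1 := integral_neg_eq_self (fun v : ℝ => v * f (v ^ 2)) (volume : Measure ℝ)
      simp only [neg_sq, neg_mul, integral_neg] at h1
      linarith
    calc (∫ v : ℝ, psi1 f v)
        = ∫ v : ℝ, ((v * f (v ^ 2) : ℝ) : ℂ) := by
          refine integral_congr_ae (Filter.Eventually.of_forall fun v => ?_)
          rw [psi1_apply]
          push_cast
          ring
      _ = (((∫ v : ℝ, v * f (v ^ 2)) : ℝ) : ℂ) := integral_ofReal
      _ = 0 := by rw [hr]; norm_num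
  -- the pointwise algebraic identity
  have hpt : ∀ (Λ : ℝ), 0 < Λ → ∀ n : ℤ,
      ((((n : ℝ) + 2) * ((n : ℝ) + 1) * f (((n : ℝ) + 3 * t) ^ 2 / Λ ^ 2) : ℝ) : ℂ)
        = (Λ : ℂ) ^ 2 * psi2 f (((n : ℝ) + 3 * t) / Λ)
          + ((Λ * (3 - 6 * t) : ℝ) : ℂ) * psi1 f (((n : ℝ) + 3 * t) / Λ)
          + (((3 * t - 1) * (3 * t - 2) : ℝ) : ℂ) * psi0 f (((n : ℝ) + 3 * t) / Λ) := by
    intro Λ hΛ n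
    have harg : (((n : ℝ) + 3 * t) / Λ) ^ 2 = ((n : ℝ) + 3 * t) ^ 2 / Λ ^ 2 := div_pow _ _ 2
    have hw : Λ * (((n : ℝ) + 3 * t) / Λ) = (n : ℝ) + 3 * t := by field_simp
    have hreal : ((n : ℝ) + 2) * ((n : ℝ) + 1) * f (((n : ℝ) + 3 * t) ^ 2 / Λ ^ 2)
        = Λ ^ 2 * (f ((((n : ℝ) + 3 * t) / Λ) ^ 2) * (((n : ℝ) + 3 * t) / Λ)
              * (((n : ℝ) + 3 * t) / Λ))
          + (Λ * (3 - 6 * t)) * (f ((((n : ℝ) + 3 * t) / Λ) ^ 2) * (((n : ℝ) + 3 * t) / Λ))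
          + ((3 * t - 1) * (3 * t - 2)) * f ((((n : ℝ) + 3 * t) / Λ) ^ 2) := by
      rw [← harg]
      linear_combination (-(f ((((n : ℝ) + 3 * t) / Λ) ^ 2))
        * (Λ * (((n : ℝ) + 3 * t) / Λ) + (n : ℝ) + 3 * t + 3 - 6 * t)) * hw
    rw [psi2_apply, psi1_apply, psi0_apply, hreal]
    push_cast
    ring
  refine ⟨fun Λ => if 0 < Λ then
      (∑' n : ℤ, ((n : ℝ) + 2) * ((n : ℝ) + 1) * f (((n : ℝ) + 3 * t) ^ 2 / Λ ^ 2))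
        - Λ ^ 3 * (∫ y : ℝ, y ^ 2 * f (y ^ 2))
        - Λ * ((3 * t - 1) * (3 * t - 2)) * (∫ y : ℝ, f (y ^ 2))
      else 0, ?_, ?_⟩
  · intro Λ hΛ
    simp only [if_pos hΛ]
    ring
  · -- the complex value of R
    have hRval : ∀ (Λ : ℝ), 0 < Λ →
        (((if 0 < Λ then
          (∑' n : ℤ, ((n : ℝ) + 2) * ((n : ℝ) + 1) * f (((n : ℝ) + 3 * t) ^ 2 / Λ ^ 2))
            - Λ ^ 3 * (∫ y : ℝ, y ^ 2 * f (y ^ 2))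
            - Λ * ((3 * t - 1) * (3 * t - 2)) * (∫ y : ℝ, f (y ^ 2))
          else 0) : ℝ) : ℂ)
        = (Λ : ℂ) ^ 3 * S2 Λ + (Λ : ℂ) ^ 2 * ((3 - 6 * t : ℝ) : ℂ) * S1 Λ
          + (Λ : ℂ) * (((3 * t - 1) * (3 * t - 2) : ℝ) : ℂ) * S0 Λ := by
      intro Λ hΛ
      obtain ⟨hsum2, e2⟩ := hS2 Λ hΛ
      obtain ⟨hsum1, e1⟩ := hS1 Λ hΛ
      obtain ⟨hsum0, e0⟩ := hS0 Λ hΛ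
      have htsum : ((((∑' n : ℤ, ((n : ℝ) + 2) * ((n : ℝ) + 1)
            * f (((n : ℝ) + 3 * t) ^ 2 / Λ ^ 2)) : ℝ)) : ℂ)
          = (Λ : ℂ) ^ 2 * (((Λ : ℂ) * ∫ v : ℝ, psi2 f v) + (Λ : ℂ) * S2 Λ)
            + ((Λ * (3 - 6 * t) : ℝ) : ℂ) * (((Λ : ℂ) * ∫ v : ℝ, psi1 f v) + (Λ : ℂ) * S1 Λ)
            + (((3 * t - 1) * (3 * t - 2) : ℝ) : ℂ)
              * (((Λ : ℂ) * ∫ v : ℝ, psi0 f v) + (Λ : ℂ) * S0 Λ) := by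
        rw [Complex.ofReal_tsum]
        rw [tsum_congr (hpt Λ hΛ)]
        rw [Summable.tsum_add ((hsum2.mul_left _).add (hsum1.mul_left _)) (hsum0.mul_left _),
          Summable.tsum_add (hsum2.mul_left _) (hsum1.mul_left _),
          tsum_mul_left, tsum_mul_left, tsum_mul_left, e2, e1, e0]
      rw [if_pos hΛ, Complex.ofReal_sub, Complex.ofReal_sub, htsum, hI2, hI1, hI0]
      push_cast
      ring
    intro k
    obtain ⟨c2, hc2⟩ := isBigO_iff.1 (hS2O (k + 3))
    obtain ⟨c1, hc1⟩ := isBigO_iff.1 (hS1O (k + 2))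
    obtain ⟨c0, hc0⟩ := isBigO_iff.1 (hS0O (k + 1))
    rw [isBigO_iff]
    refine ⟨c2 + |3 - 6 * t| * c1 + |(3 * t - 1) * (3 * t - 2)| * c0, ?_⟩
    filter_upwards [hc2, hc1, hc0, eventually_ge_atTop (1 : ℝ)] with Λ b2 b1 b0 hΛ1
    have hΛ0 : (0 : ℝ) < Λ := lt_of_lt_of_le one_pos hΛ1
    have hz : ∀ m : ℕ, Λ ^ m * Λ ^ (-((k + m : ℕ) : ℤ)) = Λ ^ (-(k : ℤ)) := by
      intro m
      rw [← zpow_natCast Λ m, ← zpow_add₀ hΛ0.ne']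
      congr 1
      push_cast
      ring
    have hnorm : ∀ m : ℕ, ‖Λ ^ (-((m : ℕ) : ℤ))‖ = Λ ^ (-((m : ℕ) : ℤ)) := fun m => by
      rw [Real.norm_eq_abs, abs_of_pos (zpow_pos hΛ0 _)]
    have hzpos : (0 : ℝ) < Λ ^ (-(k : ℤ)) := zpow_pos hΛ0 _
    -- norm computation
    have hRn : ‖(if 0 < Λ then
          (∑' n : ℤ, ((n : ℝ) + 2) * ((n : ℝ) + 1) * f (((n : ℝ) + 3 * t) ^ 2 / Λ ^ 2))
            - Λ ^ 3 * (∫ y : ℝ, y ^ 2 * f (y ^ 2))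
            - Λ * ((3 * t - 1) * (3 * t - 2)) * (∫ y : ℝ, f (y ^ 2))
          else 0)‖
        = ‖(Λ : ℂ) ^ 3 * S2 Λ + (Λ : ℂ) ^ 2 * ((3 - 6 * t : ℝ) : ℂ) * S1 Λ
          + (Λ : ℂ) * (((3 * t - 1) * (3 * t - 2) : ℝ) : ℂ) * S0 Λ‖ := by
      rw [← hRval Λ hΛ0, Complex.norm_real]
    rw [hRn]
    have n2 : ‖(Λ : ℂ) ^ 3 * S2 Λ‖ ≤ c2 * Λ ^ (-(k : ℤ)) := by
      rw [norm_mul, norm_pow, Complex.norm_real, Real.norm_eq_abs, abs_of_pos hΛ0]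
      calc Λ ^ 3 * ‖S2 Λ‖ ≤ Λ ^ 3 * (c2 * ‖Λ ^ (-((k + 3 : ℕ) : ℤ))‖) :=
            mul_le_mul_of_nonneg_left b2 (by positivity)
        _ = c2 * (Λ ^ 3 * Λ ^ (-((k + 3 : ℕ) : ℤ))) := by rw [hnorm (k + 3)]; ring
        _ = c2 * Λ ^ (-(k : ℤ)) := by rw [hz 3]
    have n1 : ‖(Λ : ℂ) ^ 2 * ((3 - 6 * t : ℝ) : ℂ) * S1 Λ‖
        ≤ |3 - 6 * t| * c1 * Λ ^ (-(k : ℤ)) := by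
      rw [norm_mul, norm_mul, norm_pow, Complex.norm_real, Complex.norm_real,
        Real.norm_eq_abs, abs_of_pos hΛ0, Real.norm_eq_abs]
      calc Λ ^ 2 * |3 - 6 * t| * ‖S1 Λ‖
          ≤ Λ ^ 2 * |3 - 6 * t| * (c1 * ‖Λ ^ (-((k + 2 : ℕ) : ℤ))‖) :=
            mul_le_mul_of_nonneg_left b1 (by positivity)
        _ = |3 - 6 * t| * c1 * (Λ ^ 2 * Λ ^ (-((k + 2 : ℕ) : ℤ))) := by rw [hnorm (k + 2)]; ring
        _ = |3 - 6 * t| * c1 * Λ ^ (-(k : ℤ)) := by rw [hz 2]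
    have n0 : ‖(Λ : ℂ) * (((3 * t - 1) * (3 * t - 2) : ℝ) : ℂ) * S0 Λ‖
        ≤ |(3 * t - 1) * (3 * t - 2)| * c0 * Λ ^ (-(k : ℤ)) := by
      rw [norm_mul, norm_mul, Complex.norm_real, Complex.norm_real,
        Real.norm_eq_abs, abs_of_pos hΛ0, Real.norm_eq_abs]
      calc Λ * |(3 * t - 1) * (3 * t - 2)| * ‖S0 Λ‖
          ≤ Λ * |(3 * t - 1) * (3 * t - 2)| * (c0 * ‖Λ ^ (-((k + 1 : ℕ) : ℤ))‖) :=
            mul_le_mul_of_nonneg_left b0 (by positivity)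
        _ = |(3 * t - 1) * (3 * t - 2)| * c0 * (Λ ^ 1 * Λ ^ (-((k + 1 : ℕ) : ℤ))) := by
            rw [hnorm (k + 1)]; ring
        _ = |(3 * t - 1) * (3 * t - 2)| * c0 * Λ ^ (-(k : ℤ)) := by rw [hz 1]
    calc ‖(Λ : ℂ) ^ 3 * S2 Λ + (Λ : ℂ) ^ 2 * ((3 - 6 * t : ℝ) : ℂ) * S1 Λ
          + (Λ : ℂ) * (((3 * t - 1) * (3 * t - 2) : ℝ) : ℂ) * S0 Λ‖
        ≤ ‖(Λ : ℂ) ^ 3 * S2 Λ + (Λ : ℂ) ^ 2 * ((3 - 6 * t : ℝ) : ℂ) * S1 Λ‖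
          + ‖(Λ : ℂ) * (((3 * t - 1) * (3 * t - 2) : ℝ) : ℂ) * S0 Λ‖ := norm_add_le _ _
      _ ≤ ‖(Λ : ℂ) ^ 3 * S2 Λ‖ + ‖(Λ : ℂ) ^ 2 * ((3 - 6 * t : ℝ) : ℂ) * S1 Λ‖
          + ‖(Λ : ℂ) * (((3 * t - 1) * (3 * t - 2) : ℝ) : ℂ) * S0 Λ‖ := by
            have := norm_add_le ((Λ : ℂ) ^ 3 * S2 Λ)
              ((Λ : ℂ) ^ 2 * ((3 - 6 * t : ℝ) : ℂ) * S1 Λ)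
            linarith
      _ ≤ c2 * Λ ^ (-(k : ℤ)) + |3 - 6 * t| * c1 * Λ ^ (-(k : ℤ))
          + |(3 * t - 1) * (3 * t - 2)| * c0 * Λ ^ (-(k : ℤ)) := by linarith
      _ = (c2 + |3 - 6 * t| * c1 + |(3 * t - 1) * (3 * t - 2)| * c0) * ‖Λ ^ (-(k : ℤ))‖ := by
            rw [Real.norm_eq_abs, abs_of_pos hzpos]
            ring
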